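/- Compensated coupling (expectation bound): Suppose L ∈ ℝ satisfies R_l(t, a, s)[ω] ≤ L for all ω ∈ Θ^T, t ∈ [T], a ∈ 𝒜, and s ∈ 𝒮. Then for every online policy with trajectory (S^t) and actions (A^t), the expected regret satisfies E[Reg] ≤ L · Σ_{t=1}^{T} P(ω ∈ Q(t, A^t, S^t)). -/

import Mathlib

open Finset MeasureTheory

/-- Offline (prophet) value function defined by the deterministic Bellman recursion. -/
noncomputable def voff {S A Θ : Type*} [Fintype A] [Nonempty A]
    (Tr : A → S → Θ → S) (Re : A → S → Θ → ℝ) (ω : ℕ → Θ) : ℕ → S → ℝ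
  | 0, _ => 0
  | (t + 1), s => ⨆ a : A, (Re a s (ω (t + 1)) + voff Tr Re ω t (Tr a s (ω (t + 1))))

/-- Marginal compensation of action `a` at time-to-go `t` in state `s` on sample path `ω`. -/
noncomputable def Rl {S A Θ : Type*} [Fintype A] [Nonempty A]
    (Tr : A → S → Θ → S) (Re : A → S → Θ → ℝ) (ω : ℕ → Θ) (t : ℕ) (a : A) (s : S) : ℝ :=
  voff Tr Re ω t s - (Re a s (ω t) + voff Tr Re ω (t - 1) (Tr a s (ω t)))

lemma Rl_nonneg {S A Θ : Type*} [Fintype A] [Nonempty A]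
    (Tr : A → S → Θ → S) (Re : A → S → Θ → ℝ) (ω : ℕ → Θ) {t : ℕ} (ht : 1 ≤ t)
    (a : A) (s : S) : 0 ≤ Rl Tr Re ω t a s := by
  obtain ⟨n, rfl⟩ : ∃ n, t = n + 1 := ⟨t - 1, (Nat.succ_pred_eq_of_pos ht).symm⟩
  have : (Re a s (ω (n + 1)) + voff Tr Re ω n (Tr a s (ω (n + 1))))
      ≤ ⨆ b : A, (Re b s (ω (n + 1)) + voff Tr Re ω n (Tr b s (ω (n + 1)))) :=
    le_ciSup (f := fun b : A => Re b s (ω (n + 1)) + voff Tr Re ω n (Tr b s (ω (n + 1))))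
      (Set.Finite.bddAbove (Set.finite_range _)) a
  simp only [Rl, voff, Nat.add_sub_cancel]
  linarith

lemma telescope_Icc (g : ℕ → ℝ) (T : ℕ) :
    ∑ t ∈ Finset.Icc 1 T, (g t - g (t - 1)) = g T - g 0 := by
  induction T with
  | zero => simp
  | succ n ih =>
    rw [Finset.sum_Icc_succ_top (Nat.succ_le_succ (Nat.zero_le n)), ih]
    simp only [Nat.add_sub_cancel]
    ring

/-- **Compensated coupling (expectation bound)**: if `L` uniformly bounds the marginal
compensations `R_l(t,a,s)[ω]` over all sample paths `ω`, times `t ∈ [T]`, actions and states,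
then for any online policy (random actions `Act` and trajectory `St` driven by the random
arrival process `W`, satisfying the state recursion), the expected regret is at most
`L · Σ_{t=1}^T P(ω ∈ Q(t, A^t, S^t))`, where `Q(t,a,s) = {R_l(t,a,s) > 0}`. -/
theorem compensated_coupling_expectation
    {S A Θ : Type*} [Fintype A] [Nonempty A]
    {Ω : Type*} [MeasurableSpace Ω] (μ : Measure Ω) [IsProbabilityMeasure μ]
    (T : ℕ) (Tr : A → S → Θ → S) (Re : A → S → Θ → ℝ)
    (W : Ω → ℕ → Θ)                      -- random arrival sequence: `W x t` is θ^t
    (L : ℝ)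
    (hL : ∀ (ω : ℕ → Θ) (t : ℕ), 1 ≤ t → t ≤ T → ∀ (a : A) (s : S),
      Rl Tr Re ω t a s ≤ L)
    (Act : ℕ → Ω → A) (St : ℕ → Ω → S)
    (hSt : ∀ x t, 1 ≤ t → t ≤ T → St (t - 1) x = Tr (Act t x) (St t x) (W x t))
    (hmeas : ∀ t, Measurable fun x => Rl Tr Re (W x) t (Act t x) (St t x)) :
    (∫ x, (voff Tr Re (W x) T (St T x)
        - ∑ t ∈ Finset.Icc 1 T, Re (Act t x) (St t x) (W x t)) ∂μ)
      ≤ L * ∑ t ∈ Finset.Icc 1 T,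
          (μ {x | 0 < Rl Tr Re (W x) t (Act t x) (St t x)}).toReal := by
  -- pointwise identity: regret = sum of marginal compensations
  have key : ∀ x, voff Tr Re (W x) T (St T x)
      - ∑ t ∈ Finset.Icc 1 T, Re (Act t x) (St t x) (W x t)
      = ∑ t ∈ Finset.Icc 1 T, Rl Tr Re (W x) t (Act t x) (St t x) := by
    intro x
    have h1 : ∀ t ∈ Finset.Icc 1 T, Rl Tr Re (W x) t (Act t x) (St t x)
        = (voff Tr Re (W x) t (St t x) - voff Tr Re (W x) (t - 1) (St (t - 1) x))
          - Re (Act t x) (St t x) (W x t) := by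
      intro t ht
      rw [Finset.mem_Icc] at ht
      rw [Rl, hSt x t ht.1 ht.2]
      ring
    rw [Finset.sum_congr rfl h1, Finset.sum_sub_distrib,
      telescope_Icc (fun t => voff Tr Re (W x) t (St t x)) T]
    simp [voff]
  -- integrability of each compensation term
  have hint : ∀ t ∈ Finset.Icc 1 T,
      Integrable (fun x => Rl Tr Re (W x) t (Act t x) (St t x)) μ := by
    intro t ht
    rw [Finset.mem_Icc] at ht
    refine Integrable.mono' (integrable_const |L|) (hmeas t).aestronglyMeasurable
      (Filter.Eventually.of_forall fun x => ?_)
    rw [Real.norm_eq_abs, abs_of_nonneg (Rl_nonneg Tr Re _ ht.1 _ _)]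
    exact le_trans (hL (W x) t ht.1 ht.2 _ _) (le_abs_self L)
  have hmeasQ : ∀ t, MeasurableSet {x | 0 < Rl Tr Re (W x) t (Act t x) (St t x)} :=
    fun t => measurableSet_lt measurable_const (hmeas t)
  calc (∫ x, (voff Tr Re (W x) T (St T x)
        - ∑ t ∈ Finset.Icc 1 T, Re (Act t x) (St t x) (W x t)) ∂μ)
      = ∑ t ∈ Finset.Icc 1 T, ∫ x, Rl Tr Re (W x) t (Act t x) (St t x) ∂μ := by
        rw [← integral_finset_sum _ hint]
        exact integral_congr_ae (Filter.Eventually.of_forall key)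
    _ ≤ ∑ t ∈ Finset.Icc 1 T,
          L * (μ {x | 0 < Rl Tr Re (W x) t (Act t x) (St t x)}).toReal := by
        refine Finset.sum_le_sum fun t ht => ?_
        rw [Finset.mem_Icc] at ht
        have hind : Integrable
            (Set.indicator {x | 0 < Rl Tr Re (W x) t (Act t x) (St t x)} (fun _ => L)) μ :=
          (integrable_const L).indicator (hmeasQ t)
        have hle : ∀ x, Rl Tr Re (W x) t (Act t x) (St t x)
            ≤ Set.indicator {x | 0 < Rl Tr Re (W x) t (Act t x) (St t x)} (fun _ => L) x := by
          intro x
          simp only [Set.indicator_apply, Set.mem_setOf_eq]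
          by_cases h : 0 < Rl Tr Re (W x) t (Act t x) (St t x)
          · rw [if_pos h]
            exact hL (W x) t ht.1 ht.2 _ _
          · rw [if_neg h]
            push_neg at h
            exact h
        calc (∫ x, Rl Tr Re (W x) t (Act t x) (St t x) ∂μ)
            ≤ ∫ x, Set.indicator {x | 0 < Rl Tr Re (W x) t (Act t x) (St t x)}
                (fun _ => L) x ∂μ :=
              integral_mono (hint t (Finset.mem_Icc.mpr ht)) hind hle
          _ = L * (μ {x | 0 < Rl Tr Re (W x) t (Act t x) (St t x)}).toReal := by
              rw [integral_indicator_const _ (hmeasQ t)]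
              simp [mul_comm, Measure.real]
    _ = L * ∑ t ∈ Finset.Icc 1 T,
          (μ {x | 0 < Rl Tr Re (W x) t (Act t x) (St t x)}).toReal := by
        rw [Finset.mul_sum]
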